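/- Let L ≥ 2, ε ≥ 0, and let m, m̃ : ℕ → ℝ be sequences satisfying |m_k| ≤ L^k, |m̃_k| ≤ L^k and |m_k − m̃_k| ≤ L^k·ε for all k. Assume that L^{−n(n−1)} ≤ h_n(m) ≤ L^{n(n−1)} and L^{−n(n−1)} ≤ h_n(m̃) ≤ L^{n(n−1)} for all n ≥ 1, and that |g_n(m)| ≤ n·L^{n(n−1)+1} and |g_n(m̃)| ≤ n·L^{n(n−1)+1} for all n ≥ 1. Then for every n ≥ 1: |g_n(m)/h_n(m) − g_n(m̃)/h_n(m̃)| ≤ n·(n+1)!·L^{4n(n−1)+1}·ε. -/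

import Mathlib

/-! Entry `(i, j)` of the Hankel matrix of `m` is bounded by `L ^ i * L ^ j` (by `L ^ i * L ^ j * L`
in the shifted last column of `g_n`), so in the Leibniz expansion each of the `n!` products moves by
at most `n` times its weight `L ^ (n * (n - 1))` (resp. `L ^ (n * (n - 1) + 1)`) times `ε`.
The ratio is then handled by
`g / h - g̃ / h̃ = ((g - g̃) * h̃ + g̃ * (h̃ - h)) / (h * h̃)` together with the bounds on `h`, `h̃`, `g̃`. -/

open Finset

/-- The `n`-th Hankel determinant of the moment sequence `m`. -/
noncomputable def hankelDet (m : ℕ → ℝ) (n : ℕ) : ℝ :=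
  Matrix.det (Matrix.of fun i j : Fin n => m ((i : ℕ) + (j : ℕ)))

/-- The shifted Hankel determinant `g_n(m)`: the last column is shifted by one. -/
noncomputable def shiftedHankelDet (m : ℕ → ℝ) (n : ℕ) : ℝ :=
  Matrix.det (Matrix.of fun i j : Fin n =>
    if (j : ℕ) = n - 1 then m ((i : ℕ) + n) else m ((i : ℕ) + (j : ℕ)))

lemma abs_prod_sub_prod_le {ι : Type*} [DecidableEq ι] (s : Finset ι) {a b c : ι → ℝ} {ε : ℝ}
    (ha : ∀ i ∈ s, |a i| ≤ c i) (hb : ∀ i ∈ s, |b i| ≤ c i)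
    (hab : ∀ i ∈ s, |a i - b i| ≤ c i * ε) :
    |∏ i ∈ s, a i - ∏ i ∈ s, b i| ≤ #s * (∏ i ∈ s, c i) * ε := by
  induction s using Finset.induction_on with
  | empty => simp
  | @insert x t hx ih =>
    simp only [forall_mem_insert] at ha hb hab
    have hc : ∀ i ∈ t, 0 ≤ c i := fun i hi => (abs_nonneg _).trans (ha.2 i hi)
    have hprod_b : |∏ i ∈ t, b i| ≤ ∏ i ∈ t, c i := by
      rw [abs_prod]; exact prod_le_prod (fun i _ => abs_nonneg _) hb.2
    rw [prod_insert hx, prod_insert hx, prod_insert hx, card_insert_of_notMem hx]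
    calc |a x * ∏ i ∈ t, a i - b x * ∏ i ∈ t, b i|
        = |a x * (∏ i ∈ t, a i - ∏ i ∈ t, b i) + (a x - b x) * ∏ i ∈ t, b i| := by ring_nf
      _ ≤ |a x| * |∏ i ∈ t, a i - ∏ i ∈ t, b i| + |a x - b x| * |∏ i ∈ t, b i| := by
        rw [← abs_mul, ← abs_mul]; exact abs_add_le _ _
      _ ≤ c x * (#t * (∏ i ∈ t, c i) * ε) + c x * ε * ∏ i ∈ t, c i := by
        have hcx : 0 ≤ c x := (abs_nonneg _).trans ha.1
        have hcxε : 0 ≤ c x * ε := (abs_nonneg _).trans hab.1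
        have hct : 0 ≤ ∏ i ∈ t, c i := prod_nonneg hc
        gcongr
        exacts [ha.1, ih ha.2 hb.2 hab.2, hab.1]
      _ = ↑(#t + 1) * (c x * ∏ i ∈ t, c i) * ε := by push_cast; ring

lemma abs_det_sub_det_le {n : ℕ} {A B : Matrix (Fin n) (Fin n) ℝ} {r s : Fin n → ℝ} {ε : ℝ}
    (hA : ∀ i j, |A i j| ≤ r i * s j) (hB : ∀ i j, |B i j| ≤ r i * s j)
    (hAB : ∀ i j, |A i j - B i j| ≤ r i * s j * ε) :
    |A.det - B.det| ≤ (n.factorial : ℝ) * n * ((∏ i, r i) * ∏ j, s j) * ε := by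
  have hperm (σ : Equiv.Perm (Fin n)) :
      |∏ i, A (σ i) i - ∏ i, B (σ i) i| ≤ n * ((∏ i, r i) * ∏ j, s j) * ε := by
    have hweight : ∏ i, r (σ i) * s i = (∏ i, r i) * ∏ j, s j := by
      rw [prod_mul_distrib, Equiv.prod_comp σ r]
    simpa [hweight] using abs_prod_sub_prod_le univ (fun i _ => hA (σ i) i)
      (fun i _ => hB (σ i) i) (fun i _ => hAB (σ i) i)
  rw [Matrix.det_apply', Matrix.det_apply', ← sum_sub_distrib]
  calc |∑ σ : Equiv.Perm (Fin n), ((Equiv.Perm.sign σ : ℝ) * ∏ i, A (σ i) i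
          - (Equiv.Perm.sign σ : ℝ) * ∏ i, B (σ i) i)|
      ≤ ∑ σ : Equiv.Perm (Fin n), |∏ i, A (σ i) i - ∏ i, B (σ i) i| := by
        refine (abs_sum_le_sum_abs _ _).trans_eq (sum_congr rfl fun σ _ => ?_)
        rw [← mul_sub, abs_mul]
        rcases Int.units_eq_one_or (Equiv.Perm.sign σ) with h | h <;> simp [h]
    _ ≤ ∑ _σ : Equiv.Perm (Fin n), n * ((∏ i, r i) * ∏ j, s j) * ε :=
        sum_le_sum fun σ _ => hperm σ
    _ = (n.factorial : ℝ) * n * ((∏ i, r i) * ∏ j, s j) * ε := by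
        rw [sum_const, card_univ, Fintype.card_perm, Fintype.card_fin, nsmul_eq_mul]; ring

lemma prod_pow_fin_mul_self (L : ℝ) (n : ℕ) :
    (∏ i : Fin n, L ^ (i : ℕ)) * ∏ i : Fin n, L ^ (i : ℕ) = L ^ (n * (n - 1)) := by
  rw [Fin.prod_univ_eq_prod_range (L ^ ·), prod_pow_eq_pow_sum, ← pow_add, ← sum_range_id_mul_two,
    mul_two]

section Hankel

variable {L ε : ℝ} {m m' : ℕ → ℝ}

lemma abs_hankelDet_sub_le (hm : ∀ k, |m k| ≤ L ^ k) (hm' : ∀ k, |m' k| ≤ L ^ k)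
    (hmm' : ∀ k, |m k - m' k| ≤ L ^ k * ε) (n : ℕ) :
    |hankelDet m n - hankelDet m' n| ≤ n.factorial * n * L ^ (n * (n - 1)) * ε := by
  rw [← prod_pow_fin_mul_self]
  exact abs_det_sub_det_le (fun i j => by rw [Matrix.of_apply, ← pow_add]; exact hm _)
    (fun i j => by rw [Matrix.of_apply, ← pow_add]; exact hm' _)
    (fun i j => by rw [Matrix.of_apply, Matrix.of_apply, ← pow_add]; exact hmm' _)

lemma abs_shiftedHankelDet_sub_le (hm : ∀ k, |m k| ≤ L ^ k) (hm' : ∀ k, |m' k| ≤ L ^ k)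
    (hmm' : ∀ k, |m k - m' k| ≤ L ^ k * ε) (n : ℕ) :
    |shiftedHankelDet m n - shiftedHankelDet m' n| ≤
      n.factorial * n * L ^ (n * (n - 1) + 1) * ε := by
  obtain _ | n := n
  · simp [shiftedHankelDet]
  have hweight : (∏ i : Fin (n + 1), L ^ (i : ℕ)) *
      ∏ j : Fin (n + 1), L ^ (j : ℕ) * (if (j : ℕ) = n + 1 - 1 then L else 1) =
        L ^ ((n + 1) * (n + 1 - 1) + 1) := by
    rw [prod_mul_distrib, ← mul_assoc, prod_pow_fin_mul_self, pow_succ, Fin.prod_univ_castSucc]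
    simp [Fin.val_last, (Fin.is_lt _).ne]
  have hentry {μ : ℕ → ℝ} {δ : ℝ} (hμ : ∀ k, |μ k| ≤ L ^ k * δ) (i j : Fin (n + 1)) :
      |if (j : ℕ) = n + 1 - 1 then μ (i + (n + 1)) else μ (i + j)| ≤
        L ^ (i : ℕ) * (L ^ (j : ℕ) * if (j : ℕ) = n + 1 - 1 then L else 1) * δ := by
    split_ifs with hj
    · simpa [← pow_succ, ← pow_add, hj] using hμ _
    · simpa [← pow_add] using hμ _
  rw [← hweight]
  exact abs_det_sub_det_le (fun i j => by simpa using hentry (δ := 1) (by simpa using hm) i j)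
    (fun i j => by simpa using hentry (δ := 1) (by simpa using hm') i j)
    (fun i j => by simpa only [Matrix.of_apply, ite_sub_ite] using hentry hmm' i j)

end Hankel

lemma abs_div_sub_div_le {g h g' h' P : ℝ} (hP : 0 < P) (hh : P⁻¹ ≤ h) (hh' : P⁻¹ ≤ h')
    (hh'P : h' ≤ P) : |g / h - g' / h'| ≤ (|g - g'| * P + |g'| * |h - h'|) * P ^ 2 := by
  have h0 : 0 < h := (inv_pos.2 hP).trans_le hh
  have h'0 : 0 < h' := (inv_pos.2 hP).trans_le hh'
  rw [div_sub_div _ _ h0.ne' h'0.ne', abs_div, abs_of_pos (mul_pos h0 h'0),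
    div_le_iff₀ (mul_pos h0 h'0)]
  calc |g * h' - h * g'| = |(g - g') * h' + g' * (h' - h)| := by ring_nf
    _ ≤ |g - g'| * h' + |g'| * |h - h'| := (abs_add_le _ _).trans_eq <| by
      rw [abs_mul, abs_mul, abs_of_pos h'0, abs_sub_comm h]
    _ ≤ |g - g'| * P + |g'| * |h - h'| := by gcongr
    _ = (|g - g'| * P + |g'| * |h - h'|) * P ^ 2 * (P⁻¹ * P⁻¹) := by field_simp
    _ ≤ (|g - g'| * P + |g'| * |h - h'|) * P ^ 2 * (h * h') := by gcongr

theorem stmt_14_general (L ε : ℝ) (hL : 2 ≤ L) (m mt : ℕ → ℝ)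
    (hm : ∀ k, |m k| ≤ L ^ k) (hmt : ∀ k, |mt k| ≤ L ^ k)
    (hclose : ∀ k, |m k - mt k| ≤ L ^ k * ε)
    (hh : ∀ n : ℕ, 1 ≤ n → (L ^ (n * (n - 1)))⁻¹ ≤ hankelDet m n ∧
      hankelDet m n ≤ L ^ (n * (n - 1)))
    (hht : ∀ n : ℕ, 1 ≤ n → (L ^ (n * (n - 1)))⁻¹ ≤ hankelDet mt n ∧
      hankelDet mt n ≤ L ^ (n * (n - 1)))
    (hgt : ∀ n : ℕ, 1 ≤ n → |shiftedHankelDet mt n| ≤ (n : ℝ) * L ^ (n * (n - 1) + 1)) :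
    ∀ n : ℕ, 1 ≤ n →
      |shiftedHankelDet m n / hankelDet m n -
          shiftedHankelDet mt n / hankelDet mt n| ≤
        (n : ℝ) * ((n + 1).factorial : ℝ) * L ^ (4 * n * (n - 1) + 1) * ε := by
  intro n hn
  set P := L ^ (n * (n - 1))
  have hP : 0 < P := by positivity
  have hdiff_g := abs_shiftedHankelDet_sub_le hm hmt hclose n
  have hdiff_h := abs_hankelDet_sub_le hm hmt hclose n
  have hgt_n := hgt n hn
  rw [pow_succ] at hdiff_g hgt_n
  calc _ ≤ (|shiftedHankelDet m n - shiftedHankelDet mt n| * P +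
          |shiftedHankelDet mt n| * |hankelDet m n - hankelDet mt n|) * P ^ 2 :=
        abs_div_sub_div_le hP (hh n hn).1 (hht n hn).1 (hht n hn).2
    _ ≤ (n.factorial * n * (P * L) * ε * P + n * (P * L) * (n.factorial * n * P * ε)) * P ^ 2 := by
        gcongr
    _ = n * (n + 1).factorial * L ^ (4 * n * (n - 1) + 1) * ε := by
        rw [Nat.factorial_succ, show 4 * n * (n - 1) = n * (n - 1) * 4 by ring, pow_succ L, pow_mul]
        push_cast
        ring

/-- Stability of `b_1 + ⋯ + b_n = g_n / h_n` (Heine's formula) under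
`ε`-perturbations of the moments. -/
theorem stmt_14 (L ε : ℝ) (hL : 2 ≤ L) (hε : 0 ≤ ε) (m mt : ℕ → ℝ)
    (hm : ∀ k, |m k| ≤ L ^ k) (hmt : ∀ k, |mt k| ≤ L ^ k)
    (hclose : ∀ k, |m k - mt k| ≤ L ^ k * ε)
    (hh : ∀ n : ℕ, 1 ≤ n → (L ^ (n * (n - 1)))⁻¹ ≤ hankelDet m n ∧
      hankelDet m n ≤ L ^ (n * (n - 1)))
    (hht : ∀ n : ℕ, 1 ≤ n → (L ^ (n * (n - 1)))⁻¹ ≤ hankelDet mt n ∧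
      hankelDet mt n ≤ L ^ (n * (n - 1)))
    (hg : ∀ n : ℕ, 1 ≤ n → |shiftedHankelDet m n| ≤ (n : ℝ) * L ^ (n * (n - 1) + 1))
    (hgt : ∀ n : ℕ, 1 ≤ n → |shiftedHankelDet mt n| ≤ (n : ℝ) * L ^ (n * (n - 1) + 1)) :
    ∀ n : ℕ, 1 ≤ n →
      |shiftedHankelDet m n / hankelDet m n -
          shiftedHankelDet mt n / hankelDet mt n| ≤
        (n : ℝ) * ((n + 1).factorial : ℝ) * L ^ (4 * n * (n - 1) + 1) * ε :=
  stmt_14_general L ε hL m mt hm hmt hclose hh hht hgt
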